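/- The largest eigenvalue μ of the Laplacian matrix of the graph G strictly exceeds max over all vertices v of G of 4·m_v²/(m_v + d_v). (This gives a counterexample to conjectured bound 31 of Brankov, Hansen and Stevanović.) -/

import Mathlib

/-- The edge list of the graph. -/
def edgeList : List (Fin 12 × Fin 12) :=
  [(0,3),(0,4),(0,8),(1,2),(1,3),(1,8),(1,10),(2,5),(2,7),(2,11),(3,7),(3,11),(4,6),(4,7),(5,8),(5,9),(6,9),(6,10),(7,10),(9,11),(10,11)]

/-- The graph under consideration. -/
def G : SimpleGraph (Fin 12) where
  Adj v w := (v, w) ∈ edgeList ∨ (w, v) ∈ edgeList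
  symm := ⟨fun _ _ h => h.symm⟩
  loopless := ⟨by intro v; fin_cases v <;> decide⟩

instance : DecidableRel G.Adj :=
  fun v w => inferInstanceAs (Decidable ((v, w) ∈ edgeList ∨ (w, v) ∈ edgeList))

/-- `d v` is the degree of the vertex `v`, as a real number. -/
noncomputable def d (v : Fin 12) : ℝ := G.degree v

/-- `m v` is the average of the degrees of the neighbours of `v`. -/
noncomputable def m (v : Fin 12) : ℝ :=
  (∑ u ∈ G.neighborFinset v, (G.degree u : ℝ)) / d v


noncomputable def xvec : Fin 12 → ℝ := ![-5,-12,12,12,5,-5,-5,-12,5,5,12,-12]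

set_option maxHeartbeats 1000000 in
lemma ray : dotProduct xvec (Matrix.mulVec (G.lapMatrix ℝ) xvec) = 7518 := by
  rw [dotProduct,
    show (Finset.univ : Finset (Fin 12)) = {0,1,2,3,4,5,6,7,8,9,10,11} from by decide,
    Finset.sum_insert (by decide),
      Finset.sum_insert (by decide),
      Finset.sum_insert (by decide),
      Finset.sum_insert (by decide),
      Finset.sum_insert (by decide),
      Finset.sum_insert (by decide),
      Finset.sum_insert (by decide),
      Finset.sum_insert (by decide),
      Finset.sum_insert (by decide),
      Finset.sum_insert (by decide),
      Finset.sum_insert (by decide),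
      Finset.sum_singleton]
  simp only [SimpleGraph.lapMatrix_mulVec_apply,
    show G.degree 0 = 3 from by decide, show G.degree 1 = 4 from by decide, show G.degree 2 = 4 from by decide, show G.degree 3 = 4 from by decide, show G.degree 4 = 3 from by decide, show G.degree 5 = 3 from by decide, show G.degree 6 = 3 from by decide, show G.degree 7 = 4 from by decide, show G.degree 8 = 3 from by decide, show G.degree 9 = 3 from by decide, show G.degree 10 = 4 from by decide, show G.degree 11 = 4 from by decide,
    show G.neighborFinset 0 = {3,4,8} from by decide, show G.neighborFinset 1 = {2,3,8,10} from by decide, show G.neighborFinset 2 = {1,5,7,11} from by decide, show G.neighborFinset 3 = {0,1,7,11} from by decide, show G.neighborFinset 4 = {0,6,7} from by decide, show G.neighborFinset 5 = {2,8,9} from by decide, show G.neighborFinset 6 = {4,9,10} from by decide, show G.neighborFinset 7 = {2,3,4,10} from by decide, show G.neighborFinset 8 = {0,1,5} from by decide, show G.neighborFinset 9 = {5,6,11} from by decide, show G.neighborFinset 10 = {1,6,7,11} from by decide, show G.neighborFinset 11 = {2,3,9,10} from by decide]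
  rw [Finset.sum_insert (by decide), Finset.sum_insert (by decide), Finset.sum_singleton,
      Finset.sum_insert (by decide), Finset.sum_insert (by decide), Finset.sum_insert (by decide), Finset.sum_singleton,
      Finset.sum_insert (by decide), Finset.sum_insert (by decide), Finset.sum_insert (by decide), Finset.sum_singleton,
      Finset.sum_insert (by decide), Finset.sum_insert (by decide), Finset.sum_insert (by decide), Finset.sum_singleton,
      Finset.sum_insert (by decide), Finset.sum_insert (by decide), Finset.sum_singleton,
      Finset.sum_insert (by decide), Finset.sum_insert (by decide), Finset.sum_singleton,
      Finset.sum_insert (by decide), Finset.sum_insert (by decide), Finset.sum_singleton,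
      Finset.sum_insert (by decide), Finset.sum_insert (by decide), Finset.sum_insert (by decide), Finset.sum_singleton,
      Finset.sum_insert (by decide), Finset.sum_insert (by decide), Finset.sum_singleton,
      Finset.sum_insert (by decide), Finset.sum_insert (by decide), Finset.sum_singleton,
      Finset.sum_insert (by decide), Finset.sum_insert (by decide), Finset.sum_insert (by decide), Finset.sum_singleton,
      Finset.sum_insert (by decide), Finset.sum_insert (by decide), Finset.sum_insert (by decide), Finset.sum_singleton]
  norm_num [show xvec 0 = (-5:ℝ) from rfl, show xvec 1 = (-12:ℝ) from rfl, show xvec 2 = (12:ℝ) from rfl, show xvec 3 = (12:ℝ) from rfl, show xvec 4 = (5:ℝ) from rfl, show xvec 5 = (-5:ℝ) from rfl, show xvec 6 = (-5:ℝ) from rfl, show xvec 7 = (-12:ℝ) from rfl, show xvec 8 = (5:ℝ) from rfl, show xvec 9 = (5:ℝ) from rfl, show xvec 10 = (12:ℝ) from rfl, show xvec 11 = (-12:ℝ) from rfl]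

lemma xnorm : dotProduct xvec xvec = 1014 := by
  rw [dotProduct,
    show (Finset.univ : Finset (Fin 12)) = {0,1,2,3,4,5,6,7,8,9,10,11} from by decide,
    Finset.sum_insert (by decide),
      Finset.sum_insert (by decide),
      Finset.sum_insert (by decide),
      Finset.sum_insert (by decide),
      Finset.sum_insert (by decide),
      Finset.sum_insert (by decide),
      Finset.sum_insert (by decide),
      Finset.sum_insert (by decide),
      Finset.sum_insert (by decide),
      Finset.sum_insert (by decide),
      Finset.sum_insert (by decide),
      Finset.sum_singleton]
  norm_num [show xvec 0 = (-5:ℝ) from rfl, show xvec 1 = (-12:ℝ) from rfl, show xvec 2 = (12:ℝ) from rfl, show xvec 3 = (12:ℝ) from rfl, show xvec 4 = (5:ℝ) from rfl, show xvec 5 = (-5:ℝ) from rfl, show xvec 6 = (-5:ℝ) from rfl, show xvec 7 = (-12:ℝ) from rfl, show xvec 8 = (5:ℝ) from rfl, show xvec 9 = (5:ℝ) from rfl, show xvec 10 = (12:ℝ) from rfl, show xvec 11 = (-12:ℝ) from rfl]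

set_option maxHeartbeats 1000000 in
lemma key : ∀ v : Fin 12, 4 * m v ^ 2 / (m v + d v) ≤ 225/31 := by
  have h0 : 4 * m 0 ^ 2 / (m 0 + d 0) ≤ 225/31 := by
    rw [m, d, show G.neighborFinset 0 = {3,4,8} from by decide,
      Finset.sum_insert (by decide), Finset.sum_insert (by decide), Finset.sum_singleton]
    norm_num [show G.degree 0 = 3 from by decide, show G.degree 1 = 4 from by decide, show G.degree 2 = 4 from by decide, show G.degree 3 = 4 from by decide, show G.degree 4 = 3 from by decide, show G.degree 5 = 3 from by decide, show G.degree 6 = 3 from by decide, show G.degree 7 = 4 from by decide, show G.degree 8 = 3 from by decide, show G.degree 9 = 3 from by decide, show G.degree 10 = 4 from by decide, show G.degree 11 = 4 from by decide]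
  have h1 : 4 * m 1 ^ 2 / (m 1 + d 1) ≤ 225/31 := by
    rw [m, d, show G.neighborFinset 1 = {2,3,8,10} from by decide,
      Finset.sum_insert (by decide), Finset.sum_insert (by decide), Finset.sum_insert (by decide), Finset.sum_singleton]
    norm_num [show G.degree 0 = 3 from by decide, show G.degree 1 = 4 from by decide, show G.degree 2 = 4 from by decide, show G.degree 3 = 4 from by decide, show G.degree 4 = 3 from by decide, show G.degree 5 = 3 from by decide, show G.degree 6 = 3 from by decide, show G.degree 7 = 4 from by decide, show G.degree 8 = 3 from by decide, show G.degree 9 = 3 from by decide, show G.degree 10 = 4 from by decide, show G.degree 11 = 4 from by decide]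
  have h2 : 4 * m 2 ^ 2 / (m 2 + d 2) ≤ 225/31 := by
    rw [m, d, show G.neighborFinset 2 = {1,5,7,11} from by decide,
      Finset.sum_insert (by decide), Finset.sum_insert (by decide), Finset.sum_insert (by decide), Finset.sum_singleton]
    norm_num [show G.degree 0 = 3 from by decide, show G.degree 1 = 4 from by decide, show G.degree 2 = 4 from by decide, show G.degree 3 = 4 from by decide, show G.degree 4 = 3 from by decide, show G.degree 5 = 3 from by decide, show G.degree 6 = 3 from by decide, show G.degree 7 = 4 from by decide, show G.degree 8 = 3 from by decide, show G.degree 9 = 3 from by decide, show G.degree 10 = 4 from by decide, show G.degree 11 = 4 from by decide]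
  have h3 : 4 * m 3 ^ 2 / (m 3 + d 3) ≤ 225/31 := by
    rw [m, d, show G.neighborFinset 3 = {0,1,7,11} from by decide,
      Finset.sum_insert (by decide), Finset.sum_insert (by decide), Finset.sum_insert (by decide), Finset.sum_singleton]
    norm_num [show G.degree 0 = 3 from by decide, show G.degree 1 = 4 from by decide, show G.degree 2 = 4 from by decide, show G.degree 3 = 4 from by decide, show G.degree 4 = 3 from by decide, show G.degree 5 = 3 from by decide, show G.degree 6 = 3 from by decide, show G.degree 7 = 4 from by decide, show G.degree 8 = 3 from by decide, show G.degree 9 = 3 from by decide, show G.degree 10 = 4 from by decide, show G.degree 11 = 4 from by decide]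
  have h4 : 4 * m 4 ^ 2 / (m 4 + d 4) ≤ 225/31 := by
    rw [m, d, show G.neighborFinset 4 = {0,6,7} from by decide,
      Finset.sum_insert (by decide), Finset.sum_insert (by decide), Finset.sum_singleton]
    norm_num [show G.degree 0 = 3 from by decide, show G.degree 1 = 4 from by decide, show G.degree 2 = 4 from by decide, show G.degree 3 = 4 from by decide, show G.degree 4 = 3 from by decide, show G.degree 5 = 3 from by decide, show G.degree 6 = 3 from by decide, show G.degree 7 = 4 from by decide, show G.degree 8 = 3 from by decide, show G.degree 9 = 3 from by decide, show G.degree 10 = 4 from by decide, show G.degree 11 = 4 from by decide]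
  have h5 : 4 * m 5 ^ 2 / (m 5 + d 5) ≤ 225/31 := by
    rw [m, d, show G.neighborFinset 5 = {2,8,9} from by decide,
      Finset.sum_insert (by decide), Finset.sum_insert (by decide), Finset.sum_singleton]
    norm_num [show G.degree 0 = 3 from by decide, show G.degree 1 = 4 from by decide, show G.degree 2 = 4 from by decide, show G.degree 3 = 4 from by decide, show G.degree 4 = 3 from by decide, show G.degree 5 = 3 from by decide, show G.degree 6 = 3 from by decide, show G.degree 7 = 4 from by decide, show G.degree 8 = 3 from by decide, show G.degree 9 = 3 from by decide, show G.degree 10 = 4 from by decide, show G.degree 11 = 4 from by decide]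
  have h6 : 4 * m 6 ^ 2 / (m 6 + d 6) ≤ 225/31 := by
    rw [m, d, show G.neighborFinset 6 = {4,9,10} from by decide,
      Finset.sum_insert (by decide), Finset.sum_insert (by decide), Finset.sum_singleton]
    norm_num [show G.degree 0 = 3 from by decide, show G.degree 1 = 4 from by decide, show G.degree 2 = 4 from by decide, show G.degree 3 = 4 from by decide, show G.degree 4 = 3 from by decide, show G.degree 5 = 3 from by decide, show G.degree 6 = 3 from by decide, show G.degree 7 = 4 from by decide, show G.degree 8 = 3 from by decide, show G.degree 9 = 3 from by decide, show G.degree 10 = 4 from by decide, show G.degree 11 = 4 from by decide]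
  have h7 : 4 * m 7 ^ 2 / (m 7 + d 7) ≤ 225/31 := by
    rw [m, d, show G.neighborFinset 7 = {2,3,4,10} from by decide,
      Finset.sum_insert (by decide), Finset.sum_insert (by decide), Finset.sum_insert (by decide), Finset.sum_singleton]
    norm_num [show G.degree 0 = 3 from by decide, show G.degree 1 = 4 from by decide, show G.degree 2 = 4 from by decide, show G.degree 3 = 4 from by decide, show G.degree 4 = 3 from by decide, show G.degree 5 = 3 from by decide, show G.degree 6 = 3 from by decide, show G.degree 7 = 4 from by decide, show G.degree 8 = 3 from by decide, show G.degree 9 = 3 from by decide, show G.degree 10 = 4 from by decide, show G.degree 11 = 4 from by decide]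
  have h8 : 4 * m 8 ^ 2 / (m 8 + d 8) ≤ 225/31 := by
    rw [m, d, show G.neighborFinset 8 = {0,1,5} from by decide,
      Finset.sum_insert (by decide), Finset.sum_insert (by decide), Finset.sum_singleton]
    norm_num [show G.degree 0 = 3 from by decide, show G.degree 1 = 4 from by decide, show G.degree 2 = 4 from by decide, show G.degree 3 = 4 from by decide, show G.degree 4 = 3 from by decide, show G.degree 5 = 3 from by decide, show G.degree 6 = 3 from by decide, show G.degree 7 = 4 from by decide, show G.degree 8 = 3 from by decide, show G.degree 9 = 3 from by decide, show G.degree 10 = 4 from by decide, show G.degree 11 = 4 from by decide]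
  have h9 : 4 * m 9 ^ 2 / (m 9 + d 9) ≤ 225/31 := by
    rw [m, d, show G.neighborFinset 9 = {5,6,11} from by decide,
      Finset.sum_insert (by decide), Finset.sum_insert (by decide), Finset.sum_singleton]
    norm_num [show G.degree 0 = 3 from by decide, show G.degree 1 = 4 from by decide, show G.degree 2 = 4 from by decide, show G.degree 3 = 4 from by decide, show G.degree 4 = 3 from by decide, show G.degree 5 = 3 from by decide, show G.degree 6 = 3 from by decide, show G.degree 7 = 4 from by decide, show G.degree 8 = 3 from by decide, show G.degree 9 = 3 from by decide, show G.degree 10 = 4 from by decide, show G.degree 11 = 4 from by decide]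
  have h10 : 4 * m 10 ^ 2 / (m 10 + d 10) ≤ 225/31 := by
    rw [m, d, show G.neighborFinset 10 = {1,6,7,11} from by decide,
      Finset.sum_insert (by decide), Finset.sum_insert (by decide), Finset.sum_insert (by decide), Finset.sum_singleton]
    norm_num [show G.degree 0 = 3 from by decide, show G.degree 1 = 4 from by decide, show G.degree 2 = 4 from by decide, show G.degree 3 = 4 from by decide, show G.degree 4 = 3 from by decide, show G.degree 5 = 3 from by decide, show G.degree 6 = 3 from by decide, show G.degree 7 = 4 from by decide, show G.degree 8 = 3 from by decide, show G.degree 9 = 3 from by decide, show G.degree 10 = 4 from by decide, show G.degree 11 = 4 from by decide]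
  have h11 : 4 * m 11 ^ 2 / (m 11 + d 11) ≤ 225/31 := by
    rw [m, d, show G.neighborFinset 11 = {2,3,9,10} from by decide,
      Finset.sum_insert (by decide), Finset.sum_insert (by decide), Finset.sum_insert (by decide), Finset.sum_singleton]
    norm_num [show G.degree 0 = 3 from by decide, show G.degree 1 = 4 from by decide, show G.degree 2 = 4 from by decide, show G.degree 3 = 4 from by decide, show G.degree 4 = 3 from by decide, show G.degree 5 = 3 from by decide, show G.degree 6 = 3 from by decide, show G.degree 7 = 4 from by decide, show G.degree 8 = 3 from by decide, show G.degree 9 = 3 from by decide, show G.degree 10 = 4 from by decide, show G.degree 11 = 4 from by decide]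
  intro v
  fin_cases v
  exacts [h0,h1,h2,h3,h4,h5,h6,h7,h8,h9,h10,h11]

open scoped Pointwise in
theorem laplacian_spectral_radius_exceeds_bound (μ : ℝ)
    (hmem : μ ∈ spectrum ℝ (G.lapMatrix ℝ))
    (hmax : ∀ ν ∈ spectrum ℝ (G.lapMatrix ℝ), ν ≤ μ) :
    Finset.univ.sup' Finset.univ_nonempty (fun v => 4 * m v ^ 2 / (m v + d v)) < μ := by
  have hL : (G.lapMatrix ℝ).IsHermitian := (SimpleGraph.posSemidef_lapMatrix ℝ G).1
  set L := G.lapMatrix ℝ with hLdef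
  have hM : ((algebraMap ℝ (Matrix (Fin 12) (Fin 12) ℝ)) μ - L).IsHermitian := by
    rw [Algebra.algebraMap_eq_smul_one]
    simp only [Matrix.IsHermitian, Matrix.conjTranspose_sub, Matrix.conjTranspose_smul,
      Matrix.conjTranspose_one, hL.eq, star_trivial]
  have hspec : spectrum ℝ ((algebraMap ℝ (Matrix (Fin 12) (Fin 12) ℝ)) μ - L)
      = {μ} - spectrum ℝ L := (spectrum.singleton_sub_eq L μ).symm
  have hnn : ∀ i, 0 ≤ hM.eigenvalues i := by
    intro i
    have h := hM.eigenvalues_mem_spectrum_real i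
    rw [hspec] at h
    obtain ⟨a, ha, b, hb, hab⟩ := Set.mem_sub.mp h
    rw [Set.mem_singleton_iff] at ha
    subst ha
    have := hmax b hb
    linarith [hab ▸ sub_nonneg.mpr this]
  have hPSD := hM.posSemidef_iff_eigenvalues_nonneg.mpr hnn
  have hx := (Matrix.posSemidef_iff_dotProduct_mulVec.mp hPSD).2 xvec
  rw [star_trivial, Matrix.sub_mulVec, dotProduct_sub] at hx
  have halg : dotProduct xvec
      (Matrix.mulVec ((algebraMap ℝ (Matrix (Fin 12) (Fin 12) ℝ)) μ) xvec)
      = μ * 1014 := by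
    rw [Algebra.algebraMap_eq_smul_one, Matrix.smul_mulVec, Matrix.one_mulVec,
      dotProduct_smul, xnorm]
    simp [mul_comm]
  rw [halg, ray] at hx
  have hmu : (1253 : ℝ)/169 ≤ μ := by linarith
  have : (225:ℝ)/31 < μ := lt_of_lt_of_le (by norm_num) hmu
  exact lt_of_le_of_lt (Finset.sup'_le _ _ (fun v _ => key v)) this
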